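/- arXiv:1509.00493 — 2 statements merged into one kernel-verified Lean document; each statement's English description precedes it below -/
import Mathlib

section
/- Let H be a subgroup of a discrete group G and θ ∈ ℂ[H]. If there exists a nonzero f ∈ ℓ²(G) with θ * f = 0, then there exists a nonzero k ∈ ℓ²(H) with θ * k = 0. -/
variable {G : Type*} [Group G]

/-- Left convolution action of the group ring `ℂ[H]` of a subgroup `H ≤ G` on
complex-valued functions on `G`. -/
noncomputable def subConvG {H : Subgroup G} (θ : MonoidAlgebra ℂ H) (f : G → ℂ) :
    G → ℂ :=
  fun x => ∑ h ∈ θ.coeff.support, θ.coeff h * f ((h : G)⁻¹ * x)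

/-- Left convolution action of `ℂ[H]` on complex-valued functions on `H`. -/
noncomputable def subConvH {H : Subgroup G} (θ : MonoidAlgebra ℂ H) (k : H → ℂ) :
    H → ℂ :=
  fun x => ∑ h ∈ θ.coeff.support, θ.coeff h * k (h⁻¹ * x)

/-!
Left convolution by `θ ∈ ℂ[H]` only moves points inside their right coset `H x₀`, so
restricting `f` to a coset on which it does not vanish, transported to `H` by `h ↦ h x₀`,
gives a nonzero element of `ℓ²(H)` that `θ` still annihilates.
-/

theorem Memℓp.comp_injective {α β E : Type*} [NormedAddCommGroup E] {p : ENNReal}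
    {f : α → E} (hf : Memℓp f p) {e : β → α} (he : Function.Injective e) :
    Memℓp (f ∘ e) p := by
  rcases p.trichotomy with rfl | rfl | hp
  · exact memℓp_zero <| hf.finite_dsupport.preimage he.injOn
  · exact memℓp_infty <| hf.bddAbove.mono <| Set.range_comp_subset_range e (‖f ·‖)
  · exact memℓp_gen <| (hf.summable hp).comp_injective he

theorem subConvH_comp_mul_right {H : Subgroup G} (θ : MonoidAlgebra ℂ H) (f : G → ℂ)
    (x₀ : G) :
    subConvH θ (fun h : H => f (h * x₀)) = fun h : H => subConvG θ f (h * x₀) := by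
  funext x
  simp only [subConvH, subConvG, Subgroup.coe_mul, Subgroup.coe_inv, mul_assoc]

/-- Let `H` be a subgroup of a discrete group `G` and `θ ∈ ℂ[H]`.
If `θ * f = 0` for some nonzero `f ∈ ℓ²(G)`, then `θ * k = 0` for some nonzero
`k ∈ ℓ²(H)`. -/
theorem conv_kernel_descends_to_subgroup (H : Subgroup G) (θ : MonoidAlgebra ℂ H)
    (f : lp (fun _ : G => ℂ) 2) (hf : f ≠ 0) (hθf : subConvG θ (⇑f) = 0) :
    ∃ k : lp (fun _ : H => ℂ) 2, k ≠ 0 ∧ subConvH θ (⇑k) = 0 := by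
  obtain ⟨x₀, hx₀⟩ : ∃ x₀, f x₀ ≠ 0 := by
    by_contra! h
    exact hf (lp.ext (funext h))
  have hinj : Function.Injective (fun h : H => (h : G) * x₀) :=
    (mul_left_injective x₀).comp Subtype.coe_injective
  refine ⟨⟨fun h : H => f (h * x₀), (lp.memℓp f).comp_injective hinj⟩, ?_, ?_⟩
  · intro hk
    exact hx₀ (by simpa using congrFun (congrArg Subtype.val hk) 1)
  · change subConvH θ (fun h : H => f (h * x₀)) = 0
    rw [subConvH_comp_mul_right, hθf]
    rfl
end

section
/- Let G be a group, A an abelian subgroup of finite index, and B the intersection of all G-conjugates of A. Then B is a normal abelian subgroup of finite index in G, the group ring ℂ[B] is an integral domain when B is torsion-free, and setting S = ℂ[B] \ {0}, the localization S⁻¹ℂ[G] is a finite-dimensional algebra over the field S⁻¹ℂ[B]; hence S⁻¹ℂ[G] is an artinian ring in which every non-zerodivisor is invertible. -/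
/-!
The normal core `B` of `A` is normal of finite index and, lying in `A`, abelian. A torsion-free
abelian group embeds in its divisible hull, a `ℚ`-vector space, so it has unique products and
`ℂ[B]` is a domain; let `K` be its field of fractions. Every `s ≠ 0` in `ℂ[B]` is a unit in `R`,
so `K` maps to `R` and `R` becomes a left `K`-module. As `B` is normal, a coset representative
`t` satisfies `t s = σₜ(s) t` with `σₜ` conjugation by `t`, hence `t s⁻¹ = σₜ(s)⁻¹ t`: a fraction
`x s⁻¹` with `x = ∑ cₜ t` lies in the left `K`-span of the finitely many representatives. A ring
that is a finite module over a division ring is artinian, and there right-regular elements are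
units.
-/

/-- The old Mathlib notion (removed since): a monoid is torsion-free if every
non-identity element has infinite order. -/
def Monoid.IsTorsionFree (G : Type*) [Monoid G] : Prop :=
  ∀ g : G, g ≠ 1 → ¬IsOfFinOrder g

open MonoidAlgebra

theorem uniqueProds_of_isMulTorsionFree {H : Type*} [CommGroup H] [IsMulTorsionFree H] :
    UniqueProds H :=
  have : UniqueSums (Additive H) :=
    .of_injective_addHom (DivisibleHull.coeAddMonoidHom (Additive H)).toAddHom
      DivisibleHull.coe_injective inferInstance
  inferInstanceAs (UniqueProds (Multiplicative (Additive H)))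

theorem Monoid.IsTorsionFree.uniqueProds {H : Type*} [Group H]
    (hcomm : ∀ x y : H, x * y = y * x) (htf : Monoid.IsTorsionFree H) : UniqueProds H := by
  let : CommGroup H := { mul_comm := hcomm }
  have : IsMulTorsionFree H := .of_not_isOfFinOrder htf
  exact uniqueProds_of_isMulTorsionFree

section FractionLift

variable {D R : Type*} [CommRing D] [IsDomain D] [Ring R] (g : D →+* R)
  (hg : ∀ s : D, s ≠ 0 → IsUnit (g s))

noncomputable def fractionLift : FractionRing D →+* R :=
  OreLocalization.universalHom g
    (IsUnit.liftRight (g.toMonoidHom.comp (nonZeroDivisors D).subtype)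
      fun s => hg s (nonZeroDivisors.coe_ne_zero s))
    fun _ => rfl

theorem fractionLift_mk (a : D) (s : D) (hs : s ≠ 0) :
    fractionLift g hg (a /ₒ ⟨s, mem_nonZeroDivisors_of_ne_zero hs⟩) =
      ↑(hg s hs).unit⁻¹ * g a :=
  OreLocalization.universalHom_apply ..

theorem mul_mul_unit_inv_eq_fractionLift_mul {u : R} {s s' : D} (hs : s ≠ 0) (hs' : s' ≠ 0)
    (hus : u * g s = g s' * u) (c : D) :
    g c * u * ↑(hg s hs).unit⁻¹ =
      fractionLift g hg (c /ₒ ⟨s', mem_nonZeroDivisors_of_ne_zero hs'⟩) * u := by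
  have hu : SemiconjBy u ↑(hg s hs).unit⁻¹ ↑(hg s' hs').unit⁻¹ :=
    SemiconjBy.units_inv_right (by simpa only [SemiconjBy, IsUnit.unit_spec] using hus)
  have hc : Commute (g c) ↑(hg s' hs').unit⁻¹ :=
    Commute.units_inv_right (by simpa only [IsUnit.unit_spec] using (Commute.all c s').map g)
  rw [fractionLift_mk g hg c s' hs', mul_assoc, hu.eq, ← mul_assoc, hc.eq]

include hg in
theorem isArtinianRing_of_forall_mul_eq_sum {ι : Type*} [Fintype ι] (u : ι → R)
    (hu : ∀ i s, s ≠ 0 → ∃ s', s' ≠ 0 ∧ u i * g s = g s' * u i)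
    (hR : ∀ r : R, ∃ (c : ι → D) (s : D), s ≠ 0 ∧ r * g s = ∑ i, g (c i) * u i) :
    IsArtinianRing R := by
  let := (fractionLift g hg).toModule
  have : IsScalarTower (FractionRing D) R R := ⟨fun _ _ _ => mul_assoc _ _ _⟩
  have : Module.Finite (FractionRing D) R := by
    refine ⟨Submodule.fg_def.mpr ⟨Set.range u, Set.finite_range u, eq_top_iff.mpr fun r _ => ?_⟩⟩
    obtain ⟨c, s, hs, he⟩ := hR r
    have hr : r = ∑ i, g (c i) * u i * ↑(hg s hs).unit⁻¹ := by
      rw [← Finset.sum_mul, ← he, mul_assoc, IsUnit.mul_val_inv, mul_one]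
    rw [hr]
    refine Submodule.sum_mem _ fun i _ => ?_
    obtain ⟨s', hs', hus⟩ := hu i s hs
    rw [mul_mul_unit_inv_eq_fractionLift_mul g hg hs hs' hus, ← RingHom.toModule_smul]
    exact Submodule.smul_mem _ _ (Submodule.subset_span ⟨i, rfl⟩)
  exact IsArtinianRing.of_finite (FractionRing D) R

end FractionLift

section GroupRing

variable {k G : Type*} [CommSemiring k] [Group G] (N : Subgroup G) [N.Normal]

theorem exists_eq_sum_mapDomain_mul_single [Fintype (G ⧸ N)] (x : MonoidAlgebra k G) :
    ∃ c : G ⧸ N → MonoidAlgebra k N,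
      x = ∑ q, mapDomainRingHom k N.subtype (c q) * single q.out 1 := by
  classical
  induction x using MonoidAlgebra.induction_linear with
  | zero => exact ⟨0, by simp⟩
  | add x y hx hy =>
    obtain ⟨c, rfl⟩ := hx
    obtain ⟨d, rfl⟩ := hy
    exact ⟨c + d, by simp only [Pi.add_apply, map_add, add_mul, Finset.sum_add_distrib]⟩
  | single t a =>
    obtain ⟨h, hh⟩ := QuotientGroup.mk_out_eq_mul N t
    have hb : t * (h : G)⁻¹ * t⁻¹ ∈ N := ‹N.Normal›.conj_mem _ (N.inv_mem h.2) t
    refine ⟨Pi.single (t : G ⧸ N) (single ⟨_, hb⟩ a), ?_⟩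
    rw [Fintype.sum_eq_single (t : G ⧸ N) fun q hq => by simp [Pi.single_eq_of_ne hq]]
    simp [hh, mapDomainRingHom_apply, single_mul_single, mul_assoc]

theorem single_mul_mapDomain_subtype (t : G) (s : MonoidAlgebra k N) :
    single t 1 * mapDomainRingHom k N.subtype s =
      mapDomainRingHom k N.subtype (domCongr k k (MulAut.conjNormal t) s) * single t 1 := by
  induction s using MonoidAlgebra.induction_linear with
  | zero => simp
  | add x y hx hy => simp only [map_add, mul_add, add_mul, hx, hy]
  | single b a => simp [mapDomainRingHom_apply, single_mul_single, mul_assoc]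

theorem exists_mul_eq_sum_mul_single [Fintype (G ⧸ N)] {R : Type*} [Semiring R]
    (ι : MonoidAlgebra k G →+* R)
    (hfrac : ∀ r : R, ∃ (x : MonoidAlgebra k G) (s : MonoidAlgebra k N), s ≠ 0 ∧
      r * ι (mapDomainRingHom k N.subtype s) = ι x) (r : R) :
    ∃ (c : G ⧸ N → MonoidAlgebra k N) (s : MonoidAlgebra k N), s ≠ 0 ∧
      r * ι (mapDomainRingHom k N.subtype s) =
        ∑ q, ι (mapDomainRingHom k N.subtype (c q)) * ι (single q.out 1) := by
  obtain ⟨x, s, hs, hx⟩ := hfrac r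
  obtain ⟨c, rfl⟩ := exists_eq_sum_mapDomain_mul_single N x
  exact ⟨c, s, hs, by simp only [hx, map_sum, map_mul]⟩

end GroupRing

theorem isArtinianRing_of_forall_mul_eq_sum_mul_single {k G R : Type*} [CommRing k] [Group G]
    [Ring R] (N : Subgroup G) [N.Normal] [Fintype (G ⧸ N)] [IsDomain (MonoidAlgebra k N)]
    (hcomm : ∀ x y : N, x * y = y * x) (ι : MonoidAlgebra k G →+* R)
    (hS : ∀ s : MonoidAlgebra k N, s ≠ 0 → IsUnit (ι (mapDomainRingHom k N.subtype s)))
    (hspan : ∀ r : R, ∃ (c : G ⧸ N → MonoidAlgebra k N) (s : MonoidAlgebra k N), s ≠ 0 ∧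
      r * ι (mapDomainRingHom k N.subtype s) =
        ∑ q, ι (mapDomainRingHom k N.subtype (c q)) * ι (single q.out 1)) :
    IsArtinianRing R := by
  let : CommGroup N := { mul_comm := hcomm }
  refine isArtinianRing_of_forall_mul_eq_sum (ι.comp (mapDomainRingHom k N.subtype)) hS
    (fun q : G ⧸ N => ι (single q.out 1)) (fun q s hs => ⟨domCongr k k (MulAut.conjNormal q.out) s,
      (domCongr k k _).injective.ne_iff' (map_zero _) |>.mpr hs, ?_⟩) hspan
  simpa only [RingHom.comp_apply, map_mul] using
    congrArg ι (single_mul_mapDomain_subtype N q.out s)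

/-- Let `G` be a group, `A` an abelian subgroup of finite index,
and `B = ∩_{g} gAg⁻¹` the intersection of all `G`-conjugates of `A` (the normal
core of `A`).  Then `B` is a normal abelian subgroup of finite index in `G`;
the group ring `ℂ[B]` is an integral domain when `B` is torsion-free; and,
setting `S = ℂ[B] \ {0}`, the localization `S⁻¹ℂ[G]` (formalized as any ring
`R` with an injective hom `ι : ℂ[G] → R` inverting `S` and consisting of
fractions) is a finite-dimensional algebra over the field `S⁻¹ℂ[B]` (it is
spanned over the fractions of `ℂ[B]` by finitely many elements), hence is an
artinian ring in which every non-zerodivisor is invertible. -/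
theorem localized_group_ring_artinian
    {G : Type*} [Group G] (A : Subgroup G)
    (hA : ∀ x y : A, x * y = y * x) (hAfin : A.FiniteIndex)
    (B : Subgroup G) (hB : B = A.normalCore) :
    B.Normal ∧ (∀ x y : B, x * y = y * x) ∧ B.FiniteIndex ∧
    (Monoid.IsTorsionFree B → IsDomain (MonoidAlgebra ℂ B)) ∧
    (Monoid.IsTorsionFree B →
      ∀ (R : Type) [Ring R], ∀ ι : MonoidAlgebra ℂ G →+* R,
        Function.Injective ι →
        (∀ s : MonoidAlgebra ℂ B, s ≠ 0 →
          IsUnit (ι (MonoidAlgebra.mapDomainRingHom ℂ B.subtype s))) →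
        (∀ r : R, ∃ (x : MonoidAlgebra ℂ G) (s : MonoidAlgebra ℂ B), s ≠ 0 ∧
          r * ι (MonoidAlgebra.mapDomainRingHom ℂ B.subtype s) = ι x) →
        (∃ (m : ℕ) (v : Fin m → R), ∀ r : R,
          ∃ (c : Fin m → MonoidAlgebra ℂ B) (s : MonoidAlgebra ℂ B), s ≠ 0 ∧
            r * ι (MonoidAlgebra.mapDomainRingHom ℂ B.subtype s) =
              ∑ i, ι (MonoidAlgebra.mapDomainRingHom ℂ B.subtype (c i)) * v i) ∧
        IsArtinianRing R ∧
        (∀ r : R,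
          ((∀ y : R, r * y = 0 → y = 0) ∧ (∀ y : R, y * r = 0 → y = 0)) →
            IsUnit r)) := by
  subst hB
  have hcomm (x y : A.normalCore) : x * y = y * x :=
    Subtype.ext (congrArg Subtype.val (hA ⟨x, A.normalCore_le x.2⟩ ⟨y, A.normalCore_le y.2⟩) :)
  refine ⟨A.normalCore_normal, hcomm, A.finiteIndex_normalCore, fun htf => ?_,
    fun htf R _ ι _ hS hfrac => ?_⟩
  · have := htf.uniqueProds hcomm
    infer_instance
  · have := htf.uniqueProds hcomm
    have : Fintype (G ⧸ A.normalCore) := Fintype.ofFinite _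
    have hspan := exists_mul_eq_sum_mul_single A.normalCore ι hfrac
    have hart := isArtinianRing_of_forall_mul_eq_sum_mul_single A.normalCore hcomm ι hS hspan
    let e := Fintype.equivFin (G ⧸ A.normalCore)
    refine ⟨⟨_, (fun q : G ⧸ A.normalCore => ι (single q.out 1)) ∘ e.symm, fun r => ?_⟩, hart,
      fun r ⟨_, hr⟩ => IsArtinianRing.isUnit_iff_isRightRegular.mpr
        (isRightRegular_iff_left_eq_zero_of_mul.mpr hr)⟩
    obtain ⟨c, s, hs, he⟩ := hspan r
    exact ⟨c ∘ e.symm, s, hs, he.trans (e.symm.sum_comp _).symm⟩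
end
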